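/- arXiv:1312.2767 — 6 statements merged into one kernel-verified Lean document; each statement's English description precedes it below -/
import Mathlib

section
/- For all n ≥ 0, x^n = Σ_{k=0}^{⌊n/2⌋} (C(n,k) - C(n,k-1)) f_{n-2k}(x), where f_j are the Fibonacci-type polynomials. -/
/-!
The `f_n` are the Vieta–Fibonacci polynomials `S_n` (`Polynomial.Chebyshev.S`), which Mathlib
defines for all integer indices with `S_{-1} = 0`. On all of `ℤ` the recurrence reads
`X * S_j = S_{j+1} + S_{j-1}`, so multiplying the expansion of `X^n` by `X` and regrouping with
Pascal's rule for `C(n,k) - C(n,k-1)` gives the expansion of `X^(n+1)`. The change of the upper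
summation index `n/2` is harmless: for even `n` the new last term carries `S_{-1} = 0`, and for
odd `n = 2m+1` the coefficient `C(n,m+1) - C(n,m)` vanishes.
-/

open Polynomial Polynomial.Chebyshev Finset

def chooseDiff (n k : ℕ) : ℤ := n.choose k - if k = 0 then 0 else n.choose (k - 1)

@[simp]
lemma chooseDiff_zero_right (n : ℕ) : chooseDiff n 0 = 1 := by simp [chooseDiff]

lemma chooseDiff_succ_succ (n k : ℕ) :
    chooseDiff (n + 1) (k + 1) = chooseDiff n (k + 1) + chooseDiff n k := by
  cases k <;> simp [chooseDiff, Nat.choose_succ_succ]; ring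

lemma chooseDiff_odd_half_eq_zero (m : ℕ) : chooseDiff (2 * m + 1) (m + 1) = 0 := by
  simp [chooseDiff, Nat.choose_symm_half]

section

variable (R : Type*) [CommRing R]

lemma X_mul_S (j : ℤ) : X * S R j = S R (j + 1) + S R (j - 1) := by
  rw [S_add_one]; ring

theorem X_pow_eq_sum_chooseDiff_mul_S (n : ℕ) :
    (X : R[X]) ^ n = ∑ k ∈ range (n / 2 + 1), (chooseDiff n k : R[X]) * S R (n - 2 * k) := by
  induction n with
  | zero => simp
  | succ n ih =>
    have hA : ∑ k ∈ range ((n + 1) / 2), (chooseDiff n (k + 1) : R[X]) * S R (n - 1 - 2 * k) =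
        ∑ k ∈ range (n / 2), (chooseDiff n (k + 1) : R[X]) * S R (n - 1 - 2 * k) := by
      obtain ⟨m, rfl | rfl⟩ := Nat.even_or_odd' n
      · rw [show (2 * m + 1) / 2 = 2 * m / 2 by omega]
      · rw [show (2 * m + 1 + 1) / 2 = m + 1 by omega, show (2 * m + 1) / 2 = m by omega,
          sum_range_succ, chooseDiff_odd_half_eq_zero]
        simp
    have hB : ∑ k ∈ range ((n + 1) / 2), (chooseDiff n k : R[X]) * S R (n - 1 - 2 * k) =
        ∑ k ∈ range (n / 2 + 1), (chooseDiff n k : R[X]) * S R (n - 1 - 2 * k) := by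
      obtain ⟨m, rfl | rfl⟩ := Nat.even_or_odd' n
      · rw [show (2 * m + 1) / 2 = m by omega, show 2 * m / 2 = m by omega, sum_range_succ]
        simp
      · rw [show (2 * m + 1 + 1) / 2 = (2 * m + 1) / 2 + 1 by omega]
    have hidx (k : ℕ) : ((n + 1 : ℕ) : ℤ) - 2 * ((k + 1 : ℕ) : ℤ) = n - 1 - 2 * k := by
      push_cast; ring
    calc (X : R[X]) ^ (n + 1)
        = ∑ k ∈ range (n / 2 + 1), (chooseDiff n k : R[X]) * (X * S R (n - 2 * k)) := by
          rw [pow_succ', ih, mul_sum]; exact sum_congr rfl fun k _ => by ring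
      _ = ∑ k ∈ range (n / 2 + 1), (chooseDiff n k : R[X]) * S R ((n + 1 : ℕ) - 2 * k) +
          ∑ k ∈ range (n / 2 + 1), (chooseDiff n k : R[X]) * S R (n - 1 - 2 * k) := by
          rw [← sum_add_distrib]
          refine sum_congr rfl fun k _ => ?_
          rw [X_mul_S, mul_add]; push_cast; ring_nf
      _ = _ := by
          rw [sum_range_succ' _ ((n + 1) / 2), sum_range_succ' _ (n / 2)]
          simp only [chooseDiff_succ_succ, chooseDiff_zero_right, Int.cast_add, Int.cast_one,
            add_mul, sum_add_distrib, hidx, hA, hB]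
          ring

end

lemma eval_S_eq_of_recurrence {R : Type*} [CommRing R] {a : ℕ → R} {x : R} (h0 : a 0 = 1)
    (h1 : a 1 = x) (hrec : ∀ n, a (n + 2) = x * a (n + 1) - a n) (n : ℕ) :
    (S R n).eval x = a n := by
  induction n using Nat.twoStepInduction with
  | zero => simp [h0]
  | one => simp [h1]
  | more n ih0 ih1 =>
    rw [hrec, ← ih0, ← ih1, Nat.cast_add, Nat.cast_two, S_add_two]
    simp

theorem fib_poly_moment_expansion
    (f : ℕ → ℝ → ℝ)
    (h0 : ∀ x, f 0 x = 1) (h1 : ∀ x, f 1 x = x)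
    (hrec : ∀ n x, f (n + 2) x = x * f (n + 1) x - f n x) :
    ∀ (n : ℕ) (x : ℝ),
      x ^ n = ∑ k ∈ Finset.range (n / 2 + 1),
        ((n.choose k : ℝ) - (if k = 0 then 0 else (n.choose (k - 1) : ℝ))) *
          f (n - 2 * k) x := by
  intro n x
  have hf (m : ℕ) : f m x = (S ℝ m).eval x :=
    (eval_S_eq_of_recurrence (a := (f · x)) (h0 x) (h1 x) (fun m => hrec m x) m).symm
  have hpow := congrArg (eval x) (X_pow_eq_sum_chooseDiff_mul_S ℝ n)
  rw [eval_pow, eval_X, eval_finsetSum] at hpow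
  rw [hpow]
  refine sum_congr rfl fun k hk => ?_
  have hk : 2 * k ≤ n := by have := mem_range.mp hk; omega
  rw [hf, eval_mul, eval_intCast, chooseDiff, Nat.cast_sub hk]
  push_cast
  rfl
end

section
/- For all n ≥ 1, x^n = Σ_{k=0}^{⌊n/2⌋} C(n,k) l_{n-2k}(x), where l_j are the Lucas-type polynomials. -/
open Finset Polynomial

/-!
For `n ≥ 1` the `l n` are the Vieta–Lucas polynomials `Chebyshev.C n`, so that
`l n (z + z⁻¹) = zⁿ + z⁻ⁿ`, while `l 0 = 1` is half of `C 0 = 2`. Since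
`x * C m = C (m + 1) + C (m - 1)` for every `m : ℤ`, Pascal's rule gives the binomial expansion
`∑_{k ≤ n} (n choose k) C (n - 2k) = 2 xⁿ` of `(z + z⁻¹)ⁿ`. As `C (-m) = C m`, the terms `k` and
`n - k` agree, so the sum folds onto `k ≤ n / 2` with every term doubled except the middle one
`(n choose n/2) C 0`, which is where `l 0 = C 0 / 2` comes in.
-/

theorem Finset.sum_range_succ_eq_sum_add_reflect {M : Type*} [AddCommMonoid M] (f : ℕ → M)
    (n : ℕ) :
    ∑ k ∈ range (n + 1), f k =
      ∑ k ∈ range (n / 2 + 1), (f k + if 2 * k = n then 0 else f (n - k)) := by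
  have hfilter : (range (n / 2 + 1)).filter (fun k => ¬2 * k = n) = range ((n + 1) / 2) := by
    ext k; simp only [mem_filter, mem_range]; omega
  have hupper : ∑ k ∈ range ((n + 1) / 2), f (n / 2 + 1 + k) =
      ∑ k ∈ range (n / 2 + 1), if 2 * k = n then 0 else f (n - k) := by
    rw [sum_ite, sum_const_zero, zero_add, hfilter, ← sum_range_reflect]
    refine sum_congr rfl fun k hk => ?_
    rw [mem_range] at hk
    congr 1
    omega
  rw [show n + 1 = (n / 2 + 1) + (n + 1) / 2 by omega, sum_range_add, hupper, sum_add_distrib]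

theorem Function.Even.sum_range_choose_mul {R : Type*} [CommSemiring R] {b : ℤ → R}
    (hb : b.Even) (n : ℕ) :
    ∑ k ∈ range (n + 1), (n.choose k : R) * b (n - 2 * k) =
      ∑ k ∈ range (n / 2 + 1),
        (n.choose k : R) * if 2 * k = n then b 0 else 2 * b (n - 2 * k) := by
  rw [sum_range_succ_eq_sum_add_reflect]
  refine sum_congr rfl fun k hk => ?_
  rw [mem_range] at hk
  split_ifs with hmid
  · rw [show (n : ℤ) - 2 * k = 0 by omega, add_zero]
  · rw [Nat.choose_symm (by omega), show (n : ℤ) - 2 * (n - k : ℕ) = -(n - 2 * k) by omega, hb]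
    ring

theorem sum_range_choose_mul_eq_pow_mul {R : Type*} [CommSemiring R] (x : R) (b : ℤ → R)
    (hb : ∀ m, x * b m = b (m + 1) + b (m - 1)) (n : ℕ) :
    ∑ k ∈ range (n + 1), (n.choose k : R) * b (n - 2 * k) = x ^ n * b 0 := by
  induction n with
  | zero => simp
  | succ n ih =>
    rw [pow_succ', mul_assoc, ← ih, mul_sum,
      sum_choose_succ_mul (fun k _ => b (↑(n + 1) - 2 * k)), ← sum_add_distrib]
    refine sum_congr rfl fun k _ => ?_
    rw [mul_left_comm, hb]
    push_cast
    ring_nf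

theorem Polynomial.Chebyshev.sum_range_choose_mul_C (R : Type*) [CommRing R] (n : ℕ) :
    ∑ k ∈ range (n + 1), (n.choose k : R[X]) * C R (n - 2 * k) = X ^ n * 2 := by
  simpa only [C_zero] using
    sum_range_choose_mul_eq_pow_mul X (C R) (fun m => by rw [C_add_one]; ring) n

theorem Polynomial.Chebyshev.eq_eval_C_of_recurrence {R : Type*} [CommRing R] (x : R)
    (a : ℕ → R) (h1 : a 1 = x) (h2 : a 2 = x ^ 2 - 2)
    (hrec : ∀ n, a (n + 3) = x * a (n + 2) - a (n + 1))
    (m : ℕ) (hm : 1 ≤ m) : a m = (C R m).eval x := by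
  induction m using Nat.strong_induction_on with
  | _ m ih =>
    match m, hm with
    | 1, _ => simp [h1]
    | 2, _ => simp [h2, C_two]
    | n + 3, _ =>
      have hC : C R (n + 3 : ℕ) = X * C R (n + 2 : ℕ) - C R (n + 1 : ℕ) := by
        push_cast
        rw [show (n : ℤ) + 3 = n + 1 + 2 by ring, C_add_two]
        ring_nf
      rw [hrec, ih (n + 2) (by omega) (by omega), ih (n + 1) (by omega) (by omega), hC, eval_sub,
        eval_mul, eval_X]

theorem lucas_poly_moment_expansion
    (l : ℕ → ℝ → ℝ)
    (h0 : ∀ x, l 0 x = 1) (h1 : ∀ x, l 1 x = x)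
    (h2 : ∀ x, l 2 x = x ^ 2 - 2)
    (hrec : ∀ n x, l (n + 3) x = x * l (n + 2) x - l (n + 1) x) :
    ∀ (n : ℕ), 1 ≤ n → ∀ (x : ℝ),
      x ^ n = ∑ k ∈ Finset.range (n / 2 + 1),
        (n.choose k : ℝ) * l (n - 2 * k) x := by
  intro n _ x
  have hexp := congrArg (eval x) (Chebyshev.sum_range_choose_mul_C ℝ n)
  rw [Function.Even.sum_range_choose_mul (Chebyshev.C_neg ℝ)] at hexp
  simp only [eval_finsetSum, eval_mul, eval_natCast, eval_pow, eval_X, eval_ofNat,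
    apply_ite (eval x)] at hexp
  have hterm : ∀ k ∈ range (n / 2 + 1),
      (n.choose k : ℝ) * (if 2 * k = n then (Chebyshev.C ℝ 0).eval x
        else 2 * (Chebyshev.C ℝ (n - 2 * k)).eval x) =
        2 * ((n.choose k : ℝ) * l (n - 2 * k) x) := by
    intro k hk
    rw [mem_range] at hk
    split_ifs with hmid
    · rw [show n - 2 * k = 0 by omega, Chebyshev.C_zero, eval_ofNat, h0]
      ring
    · rw [show (n : ℤ) - 2 * k = (n - 2 * k : ℕ) by omega,
        Chebyshev.eq_eval_C_of_recurrence x (l · x) (h1 x) (h2 x) (hrec · x) _ (by omega)]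
      ring
  rw [sum_congr rfl hterm, ← mul_sum] at hexp
  linarith
end

section
/- For all n ≥ 0 and m ≥ 1, x^n = Σ_{k=0}^{⌊n/m⌋} (C(n,k) - (m-1) C(n,k-1)) f^{(m)}_{n-mk}(x). -/
/-!
Write `a(n,k) = C(n,k) - (m-1) C(n,k-1)`. These coefficients satisfy Pascal's rule, and
`a(mk-1, k) = 0` because `C(mk-1, k) = (m-1) C(mk-1, k-1)`. Multiplying the expansion of `x^n`
by `x` and using `x f_j = f_{j+1} + f_{j+1-m}` (the last term absent when `j + 1 < m`) gives the
expansion of `x^(n+1)`; the vanishing of `a(mk-1, k)` is what makes the new top term come out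
right when `m` divides `n + 1`.
-/

open Finset

theorem Nat.choose_mul_succ_add_succ (i k : ℕ) :
    (i * (k + 1) + k).choose (k + 1) = i * (i * (k + 1) + k).choose k := by
  have h := Nat.choose_succ_right_eq (i * (k + 1) + k) k
  rw [Nat.add_sub_cancel] at h
  apply Nat.eq_of_mul_eq_mul_right (Nat.succ_pos k)
  rw [Nat.succ_eq_add_one, h]
  ring

section Coeff

variable (R : Type*) [CommRing R]

/-- `if k = 0 then 0 else C(n, k-1)` stands for `C(n, k-1)` with `C(n, -1) = 0`. -/
def fibMomentCoeff (m n k : ℕ) : R :=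
  n.choose k - ((m : R) - 1) * if k = 0 then 0 else (n.choose (k - 1) : R)

def truncFibMomentCoeff (m n k : ℕ) : R :=
  if m * k ≤ n then fibMomentCoeff R m n k else 0

variable {R} {m n k : ℕ}

@[simp]
theorem fibMomentCoeff_zero_right : fibMomentCoeff R m n 0 = 1 := by
  simp [fibMomentCoeff]

theorem fibMomentCoeff_succ_succ :
    fibMomentCoeff R m (n + 1) (k + 1) = fibMomentCoeff R m n (k + 1) + fibMomentCoeff R m n k := by
  rcases k with _ | k
  · simp only [fibMomentCoeff, zero_add, Nat.choose_one_right, Nat.cast_add, Nat.cast_one,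
      one_ne_zero, ↓reduceIte, tsub_self, Nat.choose_zero_right, mul_zero, sub_zero]
    ring
  · simp only [fibMomentCoeff, Nat.choose_succ_succ, Nat.cast_add, Nat.add_sub_cancel,
      Nat.add_eq_zero_iff, one_ne_zero, and_false, if_false]
    ring

theorem fibMomentCoeff_eq_zero_of_succ_eq_mul (h : n + 1 = m * (k + 1)) :
    fibMomentCoeff R m n (k + 1) = 0 := by
  obtain ⟨i, rfl⟩ : ∃ i, m = i + 1 := Nat.exists_eq_succ_of_ne_zero (by rintro rfl; omega)
  obtain rfl : n = i * (k + 1) + k := by linarith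
  simp only [fibMomentCoeff, Nat.add_eq_zero_iff, one_ne_zero, and_false, if_false,
    Nat.add_sub_cancel, Nat.choose_mul_succ_add_succ, Nat.cast_mul, Nat.cast_add, Nat.cast_one]
  ring

@[simp]
theorem truncFibMomentCoeff_zero_right : truncFibMomentCoeff R m n 0 = 1 := by
  simp [truncFibMomentCoeff]

theorem truncFibMomentCoeff_of_lt (h : n < m * k) : truncFibMomentCoeff R m n k = 0 :=
  if_neg h.not_ge

theorem truncFibMomentCoeff_succ_succ :
    truncFibMomentCoeff R m (n + 1) (k + 1) = truncFibMomentCoeff R m n (k + 1) +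
      if m * (k + 1) ≤ n + 1 then truncFibMomentCoeff R m n k else 0 := by
  have e : m * (k + 1) = m * k + m := by ring
  unfold truncFibMomentCoeff
  by_cases h₁ : m * (k + 1) ≤ n
  · rw [if_pos h₁, if_pos (by omega), if_pos (by omega), if_pos (by omega),
      fibMomentCoeff_succ_succ]
  by_cases h₂ : m * (k + 1) = n + 1
  · have hm : m ≠ 0 := by rintro rfl; omega
    rw [if_neg h₁, if_pos h₂.le, if_pos h₂.le, if_pos (by omega),
      fibMomentCoeff_succ_succ, fibMomentCoeff_eq_zero_of_succ_eq_mul h₂.symm]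
  · rw [if_neg h₁, if_neg (by omega), if_neg (by omega), add_zero]

end Coeff

section Sequence

variable {R : Type*} [CommRing R] {m : ℕ} {x : R} {g : ℕ → R}

theorem mul_eq_add_of_fibRec (hlt : ∀ n, n < m → g n = x ^ n)
    (hrec : ∀ n, m ≤ n → g n = x * g (n - 1) - g (n - m)) (j : ℕ) :
    x * g j = g (j + 1) + if m ≤ j + 1 then g (j + 1 - m) else 0 := by
  split_ifs with h
  · rw [hrec (j + 1) h, Nat.add_sub_cancel]; ring
  · rw [hlt j (by omega), hlt (j + 1) (by omega), add_zero, pow_succ, mul_comm]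

theorem pow_eq_sum_truncFibMomentCoeff (hm : 1 ≤ m) (hlt : ∀ n, n < m → g n = x ^ n)
    (hrec : ∀ n, m ≤ n → g n = x * g (n - 1) - g (n - m)) (n : ℕ) :
    x ^ n = ∑ k ∈ range (n + 1), truncFibMomentCoeff R m n k * g (n - m * k) := by
  induction n with
  | zero => simp [hlt 0 hm]
  | succ n ih =>
    have hmul : ∀ k ∈ range (n + 1), x * (truncFibMomentCoeff R m n k * g (n - m * k)) =
        truncFibMomentCoeff R m n k * g (n + 1 - m * k) +
          (if m * (k + 1) ≤ n + 1 then truncFibMomentCoeff R m n k else 0) *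
            g (n + 1 - m * (k + 1)) := by
      intro k _
      by_cases hk : m * k ≤ n
      · have e : m * (k + 1) = m * k + m := by ring
        have hcond : m ≤ n + 1 - m * k ↔ m * (k + 1) ≤ n + 1 := by omega
        rw [mul_left_comm, mul_eq_add_of_fibRec hlt hrec]
        simp only [show n - m * k + 1 = n + 1 - m * k by omega,
          show n + 1 - m * k - m = n + 1 - m * (k + 1) by omega, hcond]
        split_ifs <;> ring
      · simp [truncFibMomentCoeff, hk]
    have htop : truncFibMomentCoeff R m n (n + 1) = 0 :=
      truncFibMomentCoeff_of_lt (by nlinarith)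
    calc x ^ (n + 1)
        = ∑ k ∈ range (n + 1), (truncFibMomentCoeff R m n k * g (n + 1 - m * k) +
            (if m * (k + 1) ≤ n + 1 then truncFibMomentCoeff R m n k else 0) *
              g (n + 1 - m * (k + 1))) := by
          rw [pow_succ', ih, mul_sum, sum_congr rfl hmul]
      _ = ∑ k ∈ range (n + 1 + 1), truncFibMomentCoeff R m n k * g (n + 1 - m * k) +
            ∑ k ∈ range (n + 1), (if m * (k + 1) ≤ n + 1 then truncFibMomentCoeff R m n k else 0) *
              g (n + 1 - m * (k + 1)) := by
          rw [sum_add_distrib, sum_range_succ _ (n + 1), htop, zero_mul, add_zero]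
      _ = ∑ k ∈ range (n + 1 + 1), truncFibMomentCoeff R m (n + 1) k * g (n + 1 - m * k) := by
          simp only [sum_range_succ' _ (n + 1), truncFibMomentCoeff_succ_succ, add_mul,
            sum_add_distrib, truncFibMomentCoeff_zero_right]
          ring

end Sequence

theorem m_fib_poly_moment_expansion
    (m : ℕ) (hm : 1 ≤ m)
    (f : ℕ → ℝ → ℝ)
    (hlt : ∀ n, n < m → ∀ x, f n x = x ^ n)
    (hrec : ∀ n, m ≤ n → ∀ x, f n x = x * f (n - 1) x - f (n - m) x) :
    ∀ (n : ℕ) (x : ℝ),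
      x ^ n = ∑ k ∈ Finset.range (n / m + 1),
        ((n.choose k : ℝ) -
          ((m : ℝ) - 1) * (if k = 0 then 0 else (n.choose (k - 1) : ℝ))) *
          f (n - m * k) x := by
  intro n x
  have hmul_le : ∀ k, m * k ≤ n ↔ k ≤ n / m := fun k => by
    rw [mul_comm, Nat.le_div_iff_mul_le (by omega)]
  have hsub : range (n / m + 1) ⊆ range (n + 1) :=
    range_subset_range.2 (by have := Nat.div_le_self n m; omega)
  rw [pow_eq_sum_truncFibMomentCoeff hm (fun n hn => hlt n hn x) (fun n hn => hrec n hn x) n,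
    ← sum_subset hsub fun k _ hk => ?_]
  · refine sum_congr rfl fun k hk => ?_
    rw [truncFibMomentCoeff, if_pos ((hmul_le k).2 (Nat.lt_succ_iff.1 (mem_range.1 hk)))]
    rfl
  · rw [truncFibMomentCoeff_of_lt (by rw [← not_le, hmul_le]; simpa using hk), zero_mul]
end

section
/- For m ≥ 1 and n ≥ 0, f^{(m)}_n(x) = Σ_{k=0}^{⌊n/m⌋} C(n-(m-1)k, k) (-1)^k x^{n-mk}. -/
/-!
Both sides satisfy the same recurrence with the same initial values. For the closed form the
recurrence holds term by term: writing `j = n - m (k + 1)` for the exponent of `x`, it is Pascal's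
rule `C(j + k + 1, k + 1) = C(j + k, k + 1) + C(j + k, k)`, the two summands coming from
`x f_{n-1}` and `f_{n-m}`. Terms with `k > n / m` vanish, so the ranges of summation can be aligned.
-/

open Finset

namespace MFib

variable {R : Type*} [CommRing R]

def term (m n k : ℕ) (x : R) : R :=
  ((n - (m - 1) * k).choose k : R) * (-1) ^ k * x ^ (n - m * k)

def closedForm (m n : ℕ) (x : R) : R :=
  ∑ k ∈ range (n / m + 1), term m n k x

theorem choose_eq_zero_of_lt_mul {m n k : ℕ} (h : n < m * k) :
    (n - (m - 1) * k).choose k = 0 := by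
  apply Nat.choose_eq_zero_of_lt
  obtain _ | m := m
  · simp at h
  · have hk : k ≠ 0 := by rintro rfl; simp at h
    rw [add_tsub_cancel_right]
    rw [add_one_mul] at h
    omega

theorem term_eq_zero_of_lt_mul {m n k : ℕ} (x : R) (h : n < m * k) : term m n k x = 0 := by
  simp [term, choose_eq_zero_of_lt_mul h]

theorem term_zero (m n : ℕ) (x : R) : term m n 0 x = x ^ n := by
  simp [term]

theorem term_succ {m n : ℕ} (k : ℕ) (x : R) (hm : 1 ≤ m) (h : m ≤ n) :
    term m n (k + 1) x = x * term m (n - 1) (k + 1) x - term m (n - m) k x := by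
  obtain ⟨m, rfl⟩ := Nat.exists_eq_add_of_le' hm
  have hexp : (m + 1) * (k + 1) = m * k + m + k + 1 := by ring
  rcases lt_or_ge n ((m + 1) * (k + 1)) with hlt | hle
  · rw [term_eq_zero_of_lt_mul x hlt, term_eq_zero_of_lt_mul x (by omega),
      term_eq_zero_of_lt_mul x (by rw [add_one_mul]; omega)]
    ring
  · obtain ⟨j, rfl⟩ := Nat.exists_eq_add_of_le hle
    have e₁ : m * (k + 1) = m * k + m := by ring
    have e₂ : (m + 1) * k = m * k + k := by ring
    simp only [term, add_tsub_cancel_right, e₁, e₂, hexp,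
      show m * k + m + k + 1 + j - (m * k + m) = j + k + 1 by omega,
      show m * k + m + k + 1 + j - 1 - (m * k + m) = j + k by omega,
      show m * k + m + k + 1 + j - (m + 1) - m * k = j + k by omega,
      show m * k + m + k + 1 + j - (m + 1) - (m * k + k) = j by omega,
      add_tsub_cancel_left, Nat.choose_succ_succ', Nat.cast_add]
    rcases j with _ | j
    · simp [pow_succ]
    · rw [show m * k + m + k + 1 + (j + 1) - 1 - (m * k + m + k + 1) = j by omega]
      ring

theorem closedForm_eq_sum_range {m n M : ℕ} (x : R) (hm : 0 < m) (hM : n / m < M) :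
    closedForm m n x = ∑ k ∈ range M, term m n k x := by
  refine sum_subset (range_subset_range.mpr hM) fun k _ hk => term_eq_zero_of_lt_mul x ?_
  rw [mem_range, not_lt, Nat.add_one_le_iff, Nat.div_lt_iff_lt_mul hm] at hk
  rwa [mul_comm]

theorem closedForm_of_lt {m n : ℕ} (x : R) (h : n < m) : closedForm m n x = x ^ n := by
  rw [closedForm, Nat.div_eq_of_lt h, zero_add, sum_range_one, term_zero]

theorem closedForm_eq_sub {m n : ℕ} (x : R) (hm : 1 ≤ m) (h : m ≤ n) :
    closedForm m n x = x * closedForm m (n - 1) x - closedForm m (n - m) x := by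
  have hn : n < n / m * m + m := by
    have := Nat.lt_mul_div_succ n hm
    rw [mul_add_one, mul_comm] at this
    exact this
  have h₁ : closedForm m (n - 1) x = ∑ k ∈ range (n / m + 1), term m (n - 1) k x :=
    closedForm_eq_sum_range x hm (Nat.lt_succ_of_le (Nat.div_le_div_right (n.sub_le 1)))
  have h₂ : closedForm m (n - m) x = ∑ k ∈ range (n / m), term m (n - m) k x :=
    closedForm_eq_sum_range x hm ((Nat.div_lt_iff_lt_mul hm).mpr (by omega))
  rw [h₁, h₂, closedForm, sum_range_succ', sum_range_succ', mul_add, mul_sum, term_zero,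
    term_zero, ← pow_succ', Nat.sub_add_cancel (by omega : 1 ≤ n), add_sub_right_comm,
    ← sum_sub_distrib]
  simp only [term_succ _ x hm h]

end MFib

open MFib in
theorem m_fib_poly_closed_form
    (m : ℕ) (hm : 1 ≤ m)
    (f : ℕ → ℝ → ℝ)
    (hlt : ∀ n, n < m → ∀ x, f n x = x ^ n)
    (hrec : ∀ n, m ≤ n → ∀ x, f n x = x * f (n - 1) x - f (n - m) x) :
    ∀ (n : ℕ) (x : ℝ),
      f n x = ∑ k ∈ Finset.range (n / m + 1),
        ((n - (m - 1) * k).choose k : ℝ) * (-1 : ℝ) ^ k * x ^ (n - m * k) := by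
  intro n
  induction n using Nat.strong_induction_on with
  | _ n ih =>
    intro x
    change f n x = closedForm m n x
    rcases lt_or_ge n m with h | h
    · rw [hlt n h x, closedForm_of_lt x h]
    · rw [hrec n h x, ih (n - 1) (by omega) x, ih (n - m) (by omega) x]
      exact (closedForm_eq_sub x hm h).symm
end

section
/- For m ≥ 1 and n > 0, L^{(m)}_n(x) = f^{(m)}_n(x) - f^{(m)}_{n-m}(x), where f^{(m)}_j(x)=0 for j<0. -/
theorem m_lucas_eq_fib_sub_fib
    (m : ℕ) (hm : 1 ≤ m)
    (f : ℤ → ℝ → ℝ)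
    (hneg : ∀ n : ℤ, n < 0 → ∀ x, f n x = 0)
    (hlt : ∀ n : ℤ, 0 ≤ n → n < (m : ℤ) → ∀ x, f n x = x ^ n.toNat)
    (hrec : ∀ n : ℤ, (m : ℤ) ≤ n → ∀ x, f n x = x * f (n - 1) x - f (n - m) x)
    (L : ℕ → ℝ → ℝ)
    (hLlt : ∀ n, n < m → ∀ x, L n x = x ^ n)
    (hLm : ∀ x, L m x = x * L (m - 1) x - 2 * L 0 x)
    (hLrec : ∀ n, m < n → ∀ x, L n x = x * L (n - 1) x - L (n - m) x) :
    ∀ (n : ℕ), 0 < n → ∀ (x : ℝ),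
      L n x = f (n : ℤ) x - f ((n : ℤ) - (m : ℤ)) x := by
  have key : ∀ k : ℤ, 1 ≤ k → ∀ x, f k x = x * f (k - 1) x - f (k - m) x := by
    intro k hk x
    rcases le_or_gt (m : ℤ) k with h | h
    · exact hrec k h x
    · rw [hlt k (by omega) h x, hlt (k - 1) (by omega) (by omega) x,
        hneg (k - m) (by omega) x,
        show k.toNat = (k - 1).toNat + 1 by omega]
      ring
  intro n
  induction n using Nat.strong_induction_on with
  | _ n ih =>
    intro hn x
    rcases lt_trichotomy n m with h | h | h
    · rw [hLlt n h x, hlt n (by omega) (by exact_mod_cast h) x,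
        hneg _ (by omega) x]
      simp
    · subst h
      rw [hLm x, hLlt (n - 1) (by omega) x, hLlt 0 (by omega) x,
        hrec n (le_refl _) x, sub_self,
        hlt ((n : ℤ) - 1) (by omega) (by omega) x,
        hlt 0 (by omega) (by omega) x,
        show ((n : ℤ) - 1).toNat = n - 1 by omega]
      simp; ring
    · have h1 : 0 < n - 1 := by omega
      have h2 : 0 < n - m := by omega
      rw [hLrec n h x, ih (n - 1) (by omega) h1 x, ih (n - m) (by omega) h2 x]
      have c1 : ((n - 1 : ℕ) : ℤ) = (n : ℤ) - 1 := by omega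
      have c2 : ((n - m : ℕ) : ℤ) = (n : ℤ) - m := by omega
      rw [c1, c2, show (n : ℤ) - 1 - m = (n : ℤ) - m - 1 from by ring]
      have k1 := key ((n : ℤ) - m) (by omega) x
      have k2 := hrec n (by exact_mod_cast h.le) x
      linear_combination k1 - k2
end

section
/- The generating function C_q^{(m)}(u) = E^{(m)}(-qu)/E^{(m)}(-u) satisfies C_q^{(m)}(u) = 1 + u · C_q^{(m)}(u) C_q^{(m)}(qu) ··· C_q^{(m)}(q^{m-1}u) as formal power series. -/
/-- The q-Pochhammer symbol `(a;q)_n`. -/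
noncomputable def qPoch (a q : ℝ) (n : ℕ) : ℝ := ∏ j ∈ Finset.range n, (1 - q ^ j * a)

/-!
Write `F_i(u) = E(-q^i u)`. Comparing coefficients, the series `E` satisfies the q-difference
equation `E(-qu) = E(-u) + u E(-q^m u)`, i.e. `F_1 = F_0 + u F_m`. Since `C(q^i u) = F_{i+1}/F_i`,
the product `C(u) C(qu) ⋯ C(q^{m-1}u)` telescopes to `F_m/F_0`, and dividing the q-difference
equation by `F_0` gives `C = 1 + u F_m/F_0`.
-/

open PowerSeries Finset

namespace PowerSeries

variable {k : Type*} [Field k]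

theorem constantCoeff_rescale {R : Type*} [CommSemiring R] (a : R) (f : R⟦X⟧) :
    constantCoeff (rescale a f) = constantCoeff f := by
  rw [← coeff_zero_eq_constantCoeff_apply, coeff_rescale, pow_zero, one_mul,
    coeff_zero_eq_constantCoeff_apply]

theorem rescale_inv (a : k) (f : k⟦X⟧) : rescale a f⁻¹ = (rescale a f)⁻¹ := by
  by_cases hf : constantCoeff f = 0
  · rw [inv_eq_zero.mpr hf, inv_eq_zero.mpr ((constantCoeff_rescale a f).trans hf), map_zero]
  · rw [eq_inv_iff_mul_eq_one ((constantCoeff_rescale a f).trans_ne hf), ← map_mul,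
      PowerSeries.inv_mul_cancel f hf, map_one]

theorem prod_range_mul_inv_telescope (F : ℕ → k⟦X⟧) (hF : ∀ i, constantCoeff (F i) ≠ 0)
    (n : ℕ) : ∏ i ∈ range n, F (i + 1) * (F i)⁻¹ = F n * (F 0)⁻¹ := by
  induction n with
  | zero => rw [prod_range_zero, PowerSeries.mul_inv_cancel _ (hF 0)]
  | succ n ih =>
    rw [prod_range_succ, ih]
    calc F n * (F 0)⁻¹ * (F (n + 1) * (F n)⁻¹)
        = F (n + 1) * (F 0)⁻¹ * (F n * (F n)⁻¹) := by ring
      _ = F (n + 1) * (F 0)⁻¹ := by rw [PowerSeries.mul_inv_cancel _ (hF n), mul_one]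

end PowerSeries

theorem qPoch_succ (a q : ℝ) (n : ℕ) : qPoch a q (n + 1) = qPoch a q n * (1 - q ^ n * a) :=
  prod_range_succ _ n

theorem qPoch_self_ne_zero {q : ℝ} (hq : |q| < 1) (n : ℕ) : qPoch q q n ≠ 0 := by
  refine prod_ne_zero_iff.mpr fun j _ => sub_ne_zero.mpr fun h => ?_
  have : |q ^ j * q| < 1 := by
    rw [← pow_succ, abs_pow]
    exact pow_lt_one₀ (abs_nonneg q) hq j.succ_ne_zero
  rw [← h, abs_one] at this
  exact lt_irrefl 1 this

/-- The series `E^{(m)}(u)`. -/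
noncomputable def qExpSeries (m : ℕ) (q : ℝ) : PowerSeries ℝ :=
  mk fun n => q ^ (m * (n * (n - 1) / 2)) / qPoch q q n

theorem constantCoeff_qExpSeries (m : ℕ) (q : ℝ) : constantCoeff (qExpSeries m q) = 1 := by
  simp [qExpSeries, ← coeff_zero_eq_constantCoeff_apply, qPoch]

theorem coeff_succ_qExpSeries {q : ℝ} (hq : |q| < 1) (m n : ℕ) :
    (1 - q ^ (n + 1)) * coeff (n + 1) (qExpSeries m q) = q ^ (m * n) * coeff n (qExpSeries m q) := by
  have hPn := qPoch_self_ne_zero hq n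
  have hPsucc := qPoch_self_ne_zero hq (n + 1)
  rw [qPoch_succ] at hPsucc
  have hexp : (n + 1) * (n + 1 - 1) / 2 = n + n * (n - 1) / 2 := by
    rw [← Nat.choose_two_right, ← Nat.choose_two_right, Nat.choose_succ_succ n 1,
      Nat.choose_one_right]
  simp only [qExpSeries, coeff_mk, qPoch_succ, pow_succ q n, hexp, mul_add, pow_add]
  field_simp [right_ne_zero_of_mul hPsucc]

theorem rescale_neg_qExpSeries {q : ℝ} (hq : |q| < 1) (m : ℕ) :
    rescale (-q) (qExpSeries m q) =
      rescale (-1) (qExpSeries m q) + X * rescale (-(q ^ m)) (qExpSeries m q) := by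
  ext n
  rcases n with _ | n
  · simp only [coeff_zero_eq_constantCoeff_apply, map_add, map_mul, constantCoeff_X, zero_mul,
      add_zero, constantCoeff_rescale]
  · rw [map_add, coeff_succ_X_mul, coeff_rescale, coeff_rescale, coeff_rescale, neg_pow (q ^ m),
      ← pow_mul, mul_assoc, ← coeff_succ_qExpSeries hq]
    ring

theorem q_m_catalan_gf_equation_general (q : ℝ) (hq0 : 0 < q) (hq1 : q < 1)
    (m : ℕ)
    (E C : PowerSeries ℝ)
    (hE : E = PowerSeries.mk fun n => q ^ (m * (n * (n - 1) / 2)) / qPoch q q n)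
    (hC : C = PowerSeries.rescale (-q) E * (PowerSeries.rescale (-1) E)⁻¹) :
    C = 1 + PowerSeries.X * ∏ i ∈ Finset.range m, PowerSeries.rescale (q ^ i) C := by
  have hq : |q| < 1 := abs_lt.mpr ⟨by linarith, hq1⟩
  change E = qExpSeries m q at hE
  subst hE
  set F : ℕ → PowerSeries ℝ := fun i => rescale (-(q ^ i)) (qExpSeries m q)
  have hF : ∀ i, constantCoeff (F i) ≠ 0 := fun i => by
    simp [F, constantCoeff_rescale, constantCoeff_qExpSeries]
  have hCF : ∀ i, rescale (q ^ i) C = F (i + 1) * (F i)⁻¹ := fun i => by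
    rw [hC, map_mul, rescale_inv, rescale_rescale, rescale_rescale, neg_one_mul, neg_mul,
      ← pow_succ']
  have hC01 : C = F 1 * (F 0)⁻¹ := by simpa using hCF 0
  rw [prod_congr rfl fun i _ => hCF i, prod_range_mul_inv_telescope F hF, hC01]
  simp only [F, pow_zero, pow_one]
  rw [rescale_neg_qExpSeries hq, add_mul, PowerSeries.mul_inv_cancel _ (by simpa [F] using hF 0),
    mul_assoc]

theorem q_m_catalan_gf_equation (q : ℝ) (hq0 : 0 < q) (hq1 : q < 1)
    (m : ℕ) (hm : 1 ≤ m)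
    (E C : PowerSeries ℝ)
    (hE : E = PowerSeries.mk fun n => q ^ (m * (n * (n - 1) / 2)) / qPoch q q n)
    (hC : C = PowerSeries.rescale (-q) E * (PowerSeries.rescale (-1) E)⁻¹) :
    C = 1 + PowerSeries.X * ∏ i ∈ Finset.range m, PowerSeries.rescale (q ^ i) C :=
  q_m_catalan_gf_equation_general q hq0 hq1 m E C hE hC
end
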